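/- Let Y be a real random variable with distribution P having a density p that is bounded below by c_l > 0 on an interval containing θ₀ and θ, where θ₀ is the α-quantile of P. Define the excess pinball risk R(θ₀, θ) = 𝔼[ℓ_α(θ, Y) − ℓ_α(θ₀, Y)]. Then R(θ₀, θ) ≥ (c_l/2)(θ − θ₀)². -/

import Mathlib

/-!
Pointwise, `ℓ_α(θ, y) - ℓ_α(θ₀, y) = (θ - θ₀) (𝟙{y ≤ θ₀} - α) + |θ - y| 𝟙{y ∈ Ι θ₀ θ}`
(Knight's identity). Taking expectations, the first term vanishes because `θ₀` is the
`α`-quantile, and the density bound makes the second at least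
`c_l ∫_{Ι θ₀ θ} |θ - y| dy = c_l (θ - θ₀)² / 2`.
-/

open MeasureTheory

/-- The pinball (quantile) loss at level `α`. -/
noncomputable def pinball (α θ y : ℝ) : ℝ :=
  if θ ≤ y then α * (y - θ) else (1 - α) * (θ - y)

open Set
open scoped Interval

lemma pinball_sub_pinball (α θ₀ θ y : ℝ) :
    pinball α θ y - pinball α θ₀ y =
      (θ - θ₀) * ((Iic θ₀).indicator 1 y - α) + (Ι θ₀ θ).indicator (fun y => |θ - y|) y := by
  classical
  simp only [pinball, indicator_apply, mem_Iic, mem_uIoc, Pi.one_apply]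
  split_ifs <;> grind

lemma integral_uIoc_abs_sub (a b : ℝ) : ∫ y in Ι a b, |b - y| = (b - a) ^ 2 / 2 := by
  rcases le_total a b with hab | hba
  · rw [uIoc_of_le hab, setIntegral_congr_fun measurableSet_Ioc
      fun y hy => abs_of_nonneg (sub_nonneg.2 hy.2), ← intervalIntegral.integral_of_le hab,
      intervalIntegral.integral_comp_sub_left (fun x => x), integral_id]
    ring
  · rw [uIoc_of_ge hba, setIntegral_congr_fun measurableSet_Ioc
      fun y hy => abs_of_nonpos (sub_nonpos.2 hy.1.le), ← intervalIntegral.integral_of_le hba,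
      intervalIntegral.integral_neg, intervalIntegral.integral_comp_sub_left (fun x => x),
      integral_id]
    ring

lemma integrableOn_abs_sub_uIoc (μ : Measure ℝ) [IsLocallyFiniteMeasure μ] (c a b : ℝ) :
    IntegrableOn (fun y => |c - y|) (Ι a b) μ :=
  (by fun_prop : Continuous fun y => |c - y|).integrableOn_uIcc.mono_set uIoc_subset_uIcc

section WithDensity

variable {X : Type*} [MeasurableSpace X] {μ : Measure X} {p : X → ℝ} {s : Set X} {c : ℝ}

lemma smul_restrict_le_restrict_withDensity (hs : MeasurableSet s) (hc : ∀ y ∈ s, c ≤ p y) :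
    ENNReal.ofReal c • μ.restrict s ≤ (μ.withDensity fun y => ENNReal.ofReal (p y)).restrict s := by
  rw [restrict_withDensity hs, ← withDensity_const]
  refine withDensity_mono ?_
  filter_upwards [ae_restrict_mem hs] with y hy using ENNReal.ofReal_le_ofReal (hc y hy)

lemma mul_setIntegral_le_setIntegral_withDensity {f : X → ℝ} (hs : MeasurableSet s)
    (hc : ∀ y ∈ s, c ≤ p y) (hf : ∀ y ∈ s, 0 ≤ f y)
    (hfi : IntegrableOn f s (μ.withDensity fun y => ENNReal.ofReal (p y))) :
    c * ∫ y in s, f y ∂μ ≤ ∫ y in s, f y ∂(μ.withDensity fun y => ENNReal.ofReal (p y)) := by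
  rcases le_or_gt c 0 with hc0 | hc0
  · exact (mul_nonpos_of_nonpos_of_nonneg hc0 (setIntegral_nonneg hs hf)).trans
      (setIntegral_nonneg hs hf)
  · have hf' : 0 ≤ᵐ[(μ.withDensity fun y => ENNReal.ofReal (p y)).restrict s] f := by
      filter_upwards [ae_restrict_mem hs] with y hy using hf y hy
    have := integral_mono_measure (smul_restrict_le_restrict_withDensity hs hc) hf' hfi
    rwa [integral_smul_measure, ENNReal.toReal_ofReal hc0.le, smul_eq_mul] at this

end WithDensity

lemma integral_pinball_sub_pinball (α θ₀ θ : ℝ) (P : Measure ℝ) [IsProbabilityMeasure P] :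
    ∫ y, (pinball α θ y - pinball α θ₀ y) ∂P =
      (θ - θ₀) * (P.real (Iic θ₀) - α) + ∫ y in Ι θ₀ θ, |θ - y| ∂P := by
  have hIic : Integrable ((Iic θ₀).indicator (1 : ℝ → ℝ)) P :=
    (integrable_const (1 : ℝ)).indicator measurableSet_Iic
  have hlin : Integrable (fun y => (θ - θ₀) * ((Iic θ₀).indicator 1 y - α)) P :=
    (hIic.sub (integrable_const α)).const_mul _
  have habs := (integrableOn_abs_sub_uIoc P θ θ₀ θ).integrable_indicator measurableSet_uIoc
  simp_rw [pinball_sub_pinball]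
  rw [integral_add hlin habs, integral_indicator measurableSet_uIoc, integral_const_mul,
    integral_sub hIic (integrable_const α), integral_indicator_one measurableSet_Iic]
  simp

theorem stmt3_general (α : ℝ) (hα : α ∈ Set.Ioo (0 : ℝ) 1)
    (p : ℝ → ℝ) (P : Measure ℝ) [IsProbabilityMeasure P]
    (hdens : P = volume.withDensity (fun y => ENNReal.ofReal (p y)))
    (θ₀ θ : ℝ)
    (c_l : ℝ)
    (hlow : ∀ y ∈ Set.uIcc θ₀ θ, c_l ≤ p y)
    (hquant : P (Set.Iic θ₀) = ENNReal.ofReal α) :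
    (∫ y, (pinball α θ y - pinball α θ₀ y) ∂P) ≥ c_l / 2 * (θ - θ₀) ^ 2 := by
  have hquantile : P.real (Iic θ₀) = α := by
    rw [measureReal_def, hquant, ENNReal.toReal_ofReal hα.1.le]
  rw [integral_pinball_sub_pinball, hquantile, sub_self, mul_zero, zero_add, ge_iff_le]
  calc c_l / 2 * (θ - θ₀) ^ 2 = c_l * ∫ y in Ι θ₀ θ, |θ - y| := by
        rw [integral_uIoc_abs_sub]; ring
    _ ≤ ∫ y in Ι θ₀ θ, |θ - y| ∂P := by
        rw [hdens]
        exact mul_setIntegral_le_setIntegral_withDensity measurableSet_uIoc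
          (fun y hy => hlow y (uIoc_subset_uIcc hy)) (fun y _ => abs_nonneg _)
          (hdens ▸ integrableOn_abs_sub_uIoc P θ θ₀ θ)

/-- Quadratic lower bound on the excess pinball risk: if the distribution `P` of `Y` has a
density bounded below by `c_l` on an interval containing `θ₀` and `θ`, and `θ₀` is the
`α`-quantile of `P`, then the excess pinball risk is at least `(c_l/2)(θ - θ₀)²`. -/
theorem stmt3 (α : ℝ) (hα : α ∈ Set.Ioo (0 : ℝ) 1)
    (p : ℝ → ℝ) (P : Measure ℝ) [IsProbabilityMeasure P]
    (hdens : P = volume.withDensity (fun y => ENNReal.ofReal (p y)))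
    (θ₀ θ : ℝ)
    (c_l : ℝ) (hcl : 0 < c_l)
    (hlow : ∀ y ∈ Set.uIcc θ₀ θ, c_l ≤ p y)
    (hquant : P (Set.Iic θ₀) = ENNReal.ofReal α)
    (hint : Integrable id P) :
    (∫ y, (pinball α θ y - pinball α θ₀ y) ∂P) ≥ c_l / 2 * (θ - θ₀) ^ 2 :=
  stmt3_general α hα p P hdens θ₀ θ c_l hlow hquant
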